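/- Suppose K = Δ^d + u ∗ lk(u,K) is a finite simplicial complex on d+2 vertices obtained as the union of a d-simplex Δ^d with the star of a vertex u not in Δ^d. Then the Alexander dual of K relative to its vertex set equals lk(u,K)^{τ}, the Alexander dual of the link of u relative to the vertex set V_K − V_{st(u,K)} ∪ V_{lk(u,K)} (i.e., relative to the vertices of K outside the star of u together with the vertices of the link). -/
import Mathlib


/-- A (finite) simplicial complex is represented as a finite set of faces
(finite sets of natural-number vertices). -/
abbrev Cx : Type := Finset (Finset ℕ)

/-- `K` is a simplicial complex: closed under taking subsets of faces. -/
def IsComplex (K : Cx) : Prop := ∀ σ ∈ K, ∀ τ ⊆ σ, τ ∈ K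

/-- Vertex set of a complex. -/
def verts (K : Cx) : Finset ℕ := K.sup id

/-- The full simplex on a vertex set `V` (all subsets). -/
def simplexOn (V : Finset ℕ) : Cx := V.powerset

/-- The boundary of the simplex on `V` (all proper subsets). -/
def boundaryOn (V : Finset ℕ) : Cx := V.powerset.erase V

/-- Alexander dual of `K` relative to a ground vertex set `V`. -/
def dual (K : Cx) (V : Finset ℕ) : Cx := V.powerset.filter (fun σ => V \ σ ∉ K)

/-- Alexander dual of `K` relative to its own vertex set. -/
def dualSelf (K : Cx) : Cx := dual K (verts K)

/-- Iterated Alexander dual, each dual taken relative to the current vertex set. -/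
def iterDual : ℕ → Cx → Cx
  | 0, K => K
  | m + 1, K => dualSelf (iterDual m K)

/-- Join of two complexes (on disjoint vertex sets). -/
def join (K L : Cx) : Cx := (K ×ˢ L).image fun p => p.1 ∪ p.2

/-- Link of a face `σ` in `K`. -/
def link (σ : Finset ℕ) (K : Cx) : Cx :=
  K.filter fun τ => τ ∩ σ = ∅ ∧ τ ∪ σ ∈ K

/-- Star of a face `σ` in `K`. -/
def star (σ : Finset ℕ) (K : Cx) : Cx := K.filter fun τ => τ ∪ σ ∈ K

/-- Deletion of a vertex. -/
def del (v : ℕ) (K : Cx) : Cx := K.filter fun σ => v ∉ σ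

/-- The facets (maximal = principal faces) of `K`. -/
def facets (K : Cx) : Cx := K.filter fun σ => ∀ τ ∈ K, σ ⊆ τ → σ = τ

/-- Number of principal simplices. -/
def mCount (K : Cx) : ℕ := (facets K).card

/-- `K.sup card`, i.e. `dim K + 1`. -/
def topCard (K : Cx) : ℕ := K.sup Finset.card

/-- Dimension of a complex, as an integer (so that `dim {∅} = -1`). -/
def dimC (K : Cx) : ℤ := (topCard K : ℤ) - 1

/-- `L` is a top generated subcomplex of `K`. -/
def topGen (L K : Cx) : Prop := L ⊆ K ∧ facets L ⊆ facets K

/-- The boundary complex: generated by the ridges ((d-1)-faces) contained in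
exactly one facet of top dimension. -/
def bd (K : Cx) : Cx :=
  (K.filter fun σ => σ.card + 1 = topCard K ∧
    (K.filter fun τ => τ.card = topCard K ∧ σ ⊆ τ).card = 1).biUnion Finset.powerset

/-- Simplicial isomorphism of complexes. -/
def Iso (K L : Cx) : Prop :=
  ∃ f : ℕ → ℕ, Set.InjOn f ↑(verts K) ∧ K.image (Finset.image f) = L

/-- Elementary starring `(τ, a) K`: remove the faces containing `τ` and replace
`st(τ,K) = τ * lk(τ,K)` by `a * ∂τ * lk(τ,K)`. -/
def starringOp (τ : Finset ℕ) (a : ℕ) (K : Cx) : Cx :=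
  K.filter (fun σ => ¬ τ ⊆ σ) ∪
    join (simplexOn {a}) (join (boundaryOn τ) (link τ K))

/-- One stellar subdivision step. -/
inductive SubdivStep : Cx → Cx → Prop where
  | mk (K : Cx) (τ : Finset ℕ) (a : ℕ) : τ ∈ K → τ ≠ ∅ → a ∉ verts K →
      SubdivStep K (starringOp τ a K)

/-- `Subdiv K K'` : `K'` is obtained from `K` by stellar subdivisions. -/
def Subdiv : Cx → Cx → Prop := Relation.ReflTransGen SubdivStep

/-- Stellar equivalence (by Alexander's theorem, this is PL-isomorphism):
the equivalence relation generated by stellar subdivisions and simplicial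
isomorphisms. -/
def StellarEquiv : Cx → Cx → Prop :=
  Relation.EqvGen (fun K L => SubdivStep K L ∨ Iso K L)

/-- A combinatorial `d`-ball: a complex PL-isomorphic to the `d`-simplex. -/
def CombBall (d : ℕ) (B : Cx) : Prop :=
  StellarEquiv B (simplexOn (Finset.range (d + 1)))

/-- A combinatorial `d`-sphere: a complex PL-isomorphic to `∂Δ^{d+1}`. -/
def CombSphere (d : ℕ) (S : Cx) : Prop :=
  StellarEquiv S (boundaryOn (Finset.range (d + 2)))

/-- An elementary collapse step through a free face. -/
def CollapseStep (K L : Cx) : Prop :=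
  ∃ σ τ : Finset ℕ, σ ∈ K ∧ τ ∈ K ∧ σ ⊆ τ ∧ σ.card + 1 = τ.card ∧
    (∀ ρ ∈ K, σ ⊆ ρ → ρ = σ ∨ ρ = τ) ∧ L = K \ {σ, τ}

/-- Simplicial collapse. -/
def CollapsesTo : Cx → Cx → Prop := Relation.ReflTransGen CollapseStep

/-- A complex is collapsible if it has a (stellar) subdivision which collapses
to a single vertex. -/
def Collapsible (K : Cx) : Prop :=
  ∃ K', Subdiv K K' ∧ ∃ v : ℕ, CollapsesTo K' ({∅, {v}} : Cx)

mutual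
/-- Non-homogeneous manifold of dimension `d` (inductive definition via links:
every vertex link is an NH-ball or an NH-sphere of smaller dimension; the
`(-1)`-dimensional NH-sphere is the complex `{∅}`). -/
def NHManifold : ℕ → Cx → Prop
  | 0 => fun K => IsComplex K ∧ K.Nonempty ∧ topCard K = 1
  | (d + 1) => fun K => IsComplex K ∧ topCard K = d + 2 ∧
      ∀ v ∈ verts K,
        link {v} K = ({∅} : Cx) ∨
        (∃ k, ∃ _ : k ≤ d, NHBall k (link {v} K)) ∨
        (∃ k, ∃ _ : k ≤ d, ∃ j, ∃ _ : j ≤ k, NHSphereH k j (link {v} K))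
  termination_by d => 3 * d
  decreasing_by all_goals omega

/-- Non-homogeneous ball of dimension `d`: a collapsible NH-manifold. -/
def NHBall : ℕ → Cx → Prop
  | 0 => fun K => ∃ v : ℕ, K = ({∅, {v}} : Cx)
  | (d + 1) => fun K => NHManifold (d + 1) K ∧ Collapsible K
  termination_by d => 3 * d + 1
  decreasing_by all_goals omega

/-- Non-homogeneous sphere of dimension `d` and homotopy dimension `k`:
an NH-manifold `S` admitting a decomposition `S = B + L` with `B` a top
generated NH-ball of dimension `d`, `L` a top generated combinatorial
`k`-ball and `B ∩ L = ∂L`. -/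
def NHSphereH : ℕ → ℕ → Cx → Prop
  | d, k => fun S => NHManifold d S ∧ ∃ B L : Cx,
      NHBall d B ∧ topGen B S ∧ CombBall k L ∧ topGen L S ∧
      B ∪ L = S ∧ B ∩ L = bd L
  termination_by d k => 3 * d + 2
  decreasing_by all_goals omega
end

/-- `S = B + L` is a decomposition of the `d`-dimensional NH-sphere `S` of
homotopy dimension `k`. -/
def SphereDecomp (d k : ℕ) (S B L : Cx) : Prop :=
  NHManifold d S ∧ NHBall d B ∧ topGen B S ∧ CombBall k L ∧ topGen L S ∧
    B ∪ L = S ∧ B ∩ L = bd L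

/-- A minimal NH-sphere of dimension `d`: an NH-sphere whose number of maximal
faces equals its homotopy dimension plus `2`. -/
def MinNHSphereD (d : ℕ) (S : Cx) : Prop :=
  ∃ k : ℕ, NHSphereH d k S ∧ mCount S = k + 2

/-- A minimal NH-sphere (of any dimension, including the `(-1)`-sphere `{∅}`). -/
def MinNHSphere (S : Cx) : Prop :=
  S = ({∅} : Cx) ∨ ∃ d : ℕ, MinNHSphereD d S

/-- A minimal NH-ball of dimension `d`: an NH-ball `B` taking part in a
decomposition `S = B + L` of a minimal NH-sphere. -/
def MinNHBall (d : ℕ) (B : Cx) : Prop :=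
  ∃ (k : ℕ) (S L : Cx), SphereDecomp d k S B L ∧ mCount S = k + 2

/-- if `K = Δ^d + u * lk(u,K)` is a complex on `d+2` vertices with
`u ∉ Δ^d`, then `K^* = lk(u,K)^τ`, the Alexander dual of `lk(u,K)` relative to
`(V_K - V_{st(u,K)}) ∪ V_{lk(u,K)}`. -/
theorem stmt4 (K : Cx) (d : ℕ) (Δv : Finset ℕ) (u : ℕ)
    (hΔ : Δv.card = d + 1) (hu : u ∉ Δv) (hK : IsComplex K)
    (hdec : K = simplexOn Δv ∪ join (simplexOn {u}) (link {u} K))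
    (hV : verts K = insert u Δv) :
    dualSelf K =
      dual (link {u} K) ((verts K \ verts (star {u} K)) ∪ verts (link {u} K)) := by
  set L := link {u} K with hL
  have hmemsup : ∀ {x : ℕ} {σ : Finset ℕ}, σ ∈ K → x ∈ σ → x ∈ verts K := by
    intro x σ hσ hx
    exact Finset.mem_sup.2 ⟨σ, hσ, hx⟩
  have hΔK : ∀ σ ⊆ Δv, σ ∈ K := by
    intro σ hσ
    rw [hdec]
    exact Finset.mem_union_left _ (Finset.mem_powerset.2 hσ)
  have huK : ({u} : Finset ℕ) ∈ K := by
    have hx : u ∈ verts K := by rw [hV]; exact Finset.mem_insert_self _ _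
    obtain ⟨σ, hσ, hxσ⟩ := Finset.mem_sup.1 hx
    exact hK σ hσ {u} (Finset.singleton_subset_iff.2 hxσ)
  have hlink : ∀ ρ : Finset ℕ, u ∉ ρ → (ρ ∈ L ↔ insert u ρ ∈ K) := by
    intro ρ hρ
    constructor
    · intro h
      have h2 := (Finset.mem_filter.1 h).2.2
      rw [Finset.insert_eq, Finset.union_comm]; exact h2
    · intro h
      refine Finset.mem_filter.2 ⟨hK _ h ρ (Finset.subset_insert _ _), ?_, ?_⟩
      · ext x
        simp only [Finset.mem_inter, Finset.mem_singleton, Finset.notMem_empty,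
          iff_false, not_and]
        rintro hxρ rfl
        exact hρ hxρ
      · rw [Finset.insert_eq, Finset.union_comm] at h; exact h
  have hLsub : ∀ τ ∈ L, τ ⊆ Δv := by
    intro τ hτ
    have hτ' := Finset.mem_filter.1 hτ
    intro x hx
    have hxV : x ∈ verts K := hmemsup hτ'.1 hx
    rw [hV] at hxV
    rcases Finset.mem_insert.1 hxV with h | h
    · exfalso
      have hmem : x ∈ τ ∩ {u} := Finset.mem_inter.2 ⟨hx, by simp [h]⟩
      rw [hτ'.2.1] at hmem
      exact Finset.notMem_empty x hmem
    · exact h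
  have hvL : verts L ⊆ Δv := Finset.sup_le (fun τ hτ => hLsub τ hτ)
  have hvStar : verts (star {u} K) = insert u (verts L) := by
    apply Finset.Subset.antisymm
    · intro x hx
      obtain ⟨τ, hτ, hxτ⟩ := Finset.mem_sup.1 hx
      have hτ' := Finset.mem_filter.1 hτ
      by_cases hxu : x = u
      · exact Finset.mem_insert.2 (Or.inl hxu)
      · refine Finset.mem_insert.2 (Or.inr ?_)
        refine Finset.mem_sup.2 ⟨τ.erase u, ?_, Finset.mem_erase.2 ⟨hxu, hxτ⟩⟩
        rw [hlink _ (Finset.notMem_erase u τ)]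
        refine hK _ hτ'.2 _ ?_
        intro y hy
        rcases Finset.mem_insert.1 hy with h | h
        · rw [h]; exact Finset.mem_union_right _ (Finset.mem_singleton_self u)
        · exact Finset.mem_union_left _ (Finset.mem_of_mem_erase h)
    · intro x hx
      rcases Finset.mem_insert.1 hx with h | h
      · rw [h]
        refine Finset.mem_sup.2 ⟨{u}, ?_, Finset.mem_singleton_self u⟩
        exact Finset.mem_filter.2 ⟨huK, by simpa using huK⟩
      · obtain ⟨τ, hτ, hxτ⟩ := Finset.mem_sup.1 h
        have hτ' := Finset.mem_filter.1 hτ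
        exact Finset.mem_sup.2 ⟨τ, Finset.mem_filter.2 ⟨hτ'.1, hτ'.2.2⟩, hxτ⟩
  have hW : (verts K \ verts (star {u} K)) ∪ verts L = Δv := by
    rw [hV, hvStar]
    ext x
    simp only [Finset.mem_union, Finset.mem_sdiff, Finset.mem_insert, not_or]
    constructor
    · rintro (⟨h1, h2, h3⟩ | h)
      · rcases h1 with h | h
        · exact absurd h h2
        · exact h
      · exact hvL h
    · intro hx
      by_cases hxL : x ∈ verts L
      · exact Or.inr hxL
      · exact Or.inl ⟨Or.inr hx, fun h => hu (h ▸ hx), hxL⟩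
  have hVs : ∀ σ : Finset ℕ, u ∉ σ → (insert u Δv) \ σ = insert u (Δv \ σ) := by
    intro σ hσ
    ext x
    simp only [Finset.mem_sdiff, Finset.mem_insert]
    constructor
    · rintro ⟨(h | h), h2⟩
      · exact Or.inl h
      · exact Or.inr ⟨h, h2⟩
    · rintro (h | ⟨h1, h2⟩)
      · subst h; exact ⟨Or.inl rfl, hσ⟩
      · exact ⟨Or.inr h1, h2⟩
  rw [hW]
  ext σ
  simp only [dualSelf, dual, Finset.mem_filter, Finset.mem_powerset, hV]
  constructor
  · rintro ⟨hσV, hσK⟩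
    have huσ : u ∉ σ := by
      intro hus
      apply hσK
      apply hΔK
      intro x hx
      obtain ⟨hx1, hx2⟩ := Finset.mem_sdiff.1 hx
      rcases Finset.mem_insert.1 hx1 with h | h
      · exact absurd (h ▸ hus) hx2
      · exact h
    have hσΔ : σ ⊆ Δv := by
      intro x hx
      rcases Finset.mem_insert.1 (hσV hx) with h | h
      · exact absurd (h ▸ hx) huσ
      · exact h
    refine ⟨hσΔ, ?_⟩
    intro hmem
    apply hσK
    rw [hVs σ huσ]
    exact (hlink _ (fun h => hu (Finset.mem_sdiff.1 h).1)).1 hmem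
  · rintro ⟨hσΔ, hσL⟩
    refine ⟨hσΔ.trans (Finset.subset_insert _ _), ?_⟩
    have huσ : u ∉ σ := fun h => hu (hσΔ h)
    rw [hVs σ huσ]
    intro hmem
    exact hσL ((hlink _ (fun h => hu (Finset.mem_sdiff.1 h).1)).2 hmem)
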